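/- For the sequence x_0 = 1, x_{k+1} = x_k * exp(sqrt(1 + 1/x_k) - 1), the reciprocal y_k = 1/x_k satisfies y_{k+1} = y_k * exp(1 - sqrt(1 + y_k)), and x_k / k → 1/2 as k → ∞. -/

import Mathlib

open Filter Topology Real

/-! With `y = 1 / x`, the increment `x_{k+1} - x_k` equals `(exp (√(1 + y) - 1) - 1) / y`, a
difference quotient at `0` of `y ↦ exp (√(1 + y) - 1)`, whose derivative there is `1 / 2`.
Since `x_k ≥ 1 + k / 3`, `y_k → 0`, so the increments tend to `1 / 2`, and Cesàro averaging
gives `x_k / k → 1 / 2`. -/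

theorem tendsto_div_natCast_of_tendsto_sub {u : ℕ → ℝ} {l : ℝ}
    (h : Tendsto (fun n => u (n + 1) - u n) atTop (𝓝 l)) :
    Tendsto (fun n : ℕ => u n / n) atTop (𝓝 l) := by
  have hmean : Tendsto (fun n : ℕ => (n : ℝ)⁻¹ * (u n - u 0)) atTop (𝓝 l) := by
    simpa only [Finset.sum_range_sub] using h.cesaro
  have hinit : Tendsto (fun n : ℕ => (n : ℝ)⁻¹ * u 0) atTop (𝓝 0) := by
    simpa using (tendsto_inv_atTop_zero.comp tendsto_natCast_atTop_atTop).mul_const (u 0)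
  simpa only [add_zero] using
    (hmean.add hinit).congr fun n => by rw [div_eq_inv_mul]; ring

theorem hasDerivAt_exp_sqrt_one_add_sub_one :
    HasDerivAt (fun y : ℝ => exp (√(1 + y) - 1)) (1 / 2) 0 := by
  have h := (((hasDerivAt_id (0 : ℝ)).const_add 1).sqrt (by norm_num)).sub_const 1 |>.exp
  simpa using h

theorem tendsto_exp_sqrt_one_add_sub_one_div :
    Tendsto (fun y : ℝ => (exp (√(1 + y) - 1) - 1) / y) (𝓝[≠] 0) (𝓝 (1 / 2)) := by
  refine (hasDerivAt_iff_tendsto_slope.1 hasDerivAt_exp_sqrt_one_add_sub_one).congr fun y => ?_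
  simp [slope_def_field]

theorem add_one_div_three_le_mul_exp_sqrt {t : ℝ} (ht : 1 ≤ t) :
    t + 1 / 3 ≤ t * exp (√(1 + 1 / t) - 1) := by
  set y := 1 / t with hy
  have hy0 : 0 < y := by positivity
  have hy1 : y ≤ 1 := by rw [hy, div_le_one (by linarith)]; exact ht
  have hty : t * y = 1 := by rw [hy, mul_one_div_cancel (by positivity)]
  have hsqrt : 1 + y / 3 ≤ √(1 + y) := Real.le_sqrt' (by linarith) |>.2 (by nlinarith)
  nlinarith [add_one_le_exp (√(1 + y) - 1)]

theorem mul_exp_sqrt_sub_sub_self {t : ℝ} (ht : t ≠ 0) :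
    t * exp (√(1 + 1 / t) - 1) - t = (exp (√(1 + 1 / t) - 1) - 1) / (1 / t) := by
  field_simp

theorem one_div_mul_exp_sub_one (t s : ℝ) :
    1 / (t * exp (s - 1)) = 1 / t * exp (1 - s) := by
  rw [← neg_sub s 1, exp_neg, one_div, one_div, mul_inv]

theorem one_add_div_three_le_of_rec {x : ℕ → ℝ} (h0 : x 0 = 1)
    (hrec : ∀ k, x (k + 1) = x k * exp (√(1 + 1 / x k) - 1)) (k : ℕ) :
    1 + (k : ℝ) / 3 ≤ x k := by
  induction k with
  | zero => simp [h0]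
  | succ k ih =>
    have hk : 1 ≤ x k := le_trans (le_add_of_nonneg_right (by positivity)) ih
    push_cast
    linarith [hrec k ▸ add_one_div_three_le_mul_exp_sqrt hk]

theorem stmt_19 (x : ℕ → ℝ)
    (h0 : x 0 = 1)
    (hrec : ∀ k, x (k + 1) = x k * Real.exp (Real.sqrt (1 + 1 / x k) - 1)) :
    (∀ k, 1 / x (k + 1) = (1 / x k) * Real.exp (1 - Real.sqrt (1 + 1 / x k))) ∧
      Tendsto (fun k : ℕ => x k / (k : ℝ)) atTop (nhds (1 / 2)) := by
  have hlb := one_add_div_three_le_of_rec h0 hrec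
  have hx_top : Tendsto x atTop atTop :=
    tendsto_atTop_mono hlb <| tendsto_atTop_add_const_left _ 1 <|
      tendsto_natCast_atTop_atTop.atTop_div_const (by norm_num)
  have hy : Tendsto (fun k => 1 / x k) atTop (𝓝[≠] 0) := by
    simpa only [one_div, Function.comp_def] using
      (tendsto_inv_atTop_nhdsGT_zero.mono_right (nhdsGT_le_nhdsNE 0)).comp hx_top
  refine ⟨fun k => by rw [hrec k, one_div_mul_exp_sub_one], ?_⟩
  refine tendsto_div_natCast_of_tendsto_sub <|
    (tendsto_exp_sqrt_one_add_sub_one_div.comp hy).congr fun k => ?_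
  have hk : x k ≠ 0 := (lt_of_lt_of_le (by positivity) (hlb k)).ne'
  rw [Function.comp_apply, hrec k, mul_exp_sqrt_sub_sub_self hk]
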